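/- Assume λ₁ ≠ μ₁c₁. Then the quartic polynomial Δ₁ has exactly four real roots y₁ < y₂ < y₃ < y₄, all of which are positive and pairwise distinct, and they satisfy 0 < y₁ < y₂ < 1 < y₃ < y₄. -/

import Mathlib

/-- Δ₁(y) = (μ₂c₂y² − (λ₁+λ₂+μ₁c₁+μ₂c₂)y + λ₂)² − 4μ₁c₁λ₁y² -/
noncomputable def Delta1 (la1 la2 mu1 mu2 c1 c2 : ℝ) (y : ℝ) : ℝ :=
  (mu2 * c2 * y ^ 2 - (la1 + la2 + mu1 * c1 + mu2 * c2) * y + la2) ^ 2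
    - 4 * mu1 * c1 * la1 * y ^ 2

/- Writing `a = √(μ₁c₁λ₁)`, `Δ₁` is a difference of squares and factors into the quadratics
`μ₂c₂y² − (λ₁+λ₂+μ₁c₁+μ₂c₂ ± 2a)y + λ₂`. Both are positive at `0` and, since
`2a < λ₁ + μ₁c₁` (AM–GM, strict because `λ₁ ≠ μ₁c₁`), negative at `1`, so each has one root in
`(0, 1)` and one in `(1, ∞)`. The two quadratics differ by `4ay`, so the `+` quadratic is
negative at the roots of the `−` one: its roots enclose the others. -/

lemma mem_Ioo_of_quadratic_neg {a b c r s t : ℝ} (ha : 0 < a) (hrs : r ≤ s)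
    (hf : ∀ y : ℝ, a * y ^ 2 + b * y + c = a * (y - r) * (y - s))
    (ht : a * t ^ 2 + b * t + c < 0) : r < t ∧ t < s := by
  rw [hf, mul_assoc] at ht
  have h : (t - r) * (t - s) < 0 := neg_of_mul_neg_right ht ha.le
  constructor <;> nlinarith

lemma exists_roots_around_of_quadratic_neg {a b c t : ℝ} (ha : 0 < a)
    (ht : a * t ^ 2 + b * t + c < 0) :
    ∃ r s : ℝ, r < t ∧ t < s ∧ ∀ y : ℝ, a * y ^ 2 + b * y + c = a * (y - r) * (y - s) := by
  have hdisc : 0 < b ^ 2 - 4 * a * c := by nlinarith [sq_nonneg (2 * a * t + b)]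
  set d := √(b ^ 2 - 4 * a * c)
  have hd : 0 < d := Real.sqrt_pos.2 hdisc
  have hd2 : d ^ 2 = b ^ 2 - 4 * a * c := Real.sq_sqrt hdisc.le
  have hfactor : ∀ y : ℝ, a * y ^ 2 + b * y + c
      = a * (y - (-b - d) / (2 * a)) * (y - (-b + d) / (2 * a)) := by
    intro y
    field_simp
    linear_combination hd2
  have hrs : (-b - d) / (2 * a) ≤ (-b + d) / (2 * a) := by gcongr; linarith
  obtain ⟨hr, hs⟩ := mem_Ioo_of_quadratic_neg ha hrs hfactor ht
  exact ⟨_, _, hr, hs, hfactor⟩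

lemma two_mul_lt_add_of_sq_eq_mul {x y a : ℝ} (hx : 0 < x) (hy : 0 < y) (hxy : x ≠ y)
    (ha : 0 ≤ a) (ha2 : a ^ 2 = x * y) : 2 * a < x + y := by
  have hsq : 0 < (x - y) ^ 2 := by positivity [sub_ne_zero.2 hxy]
  nlinarith

lemma Delta1_eq_mul (la1 la2 mu1 mu2 c1 c2 : ℝ) {a : ℝ} (ha2 : a ^ 2 = mu1 * c1 * la1) (y : ℝ) :
    Delta1 la1 la2 mu1 mu2 c1 c2 y =
      (mu2 * c2 * y ^ 2 + -(la1 + la2 + mu1 * c1 + mu2 * c2 + 2 * a) * y + la2) *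
        (mu2 * c2 * y ^ 2 + -(la1 + la2 + mu1 * c1 + mu2 * c2 - 2 * a) * y + la2) := by
  rw [Delta1]
  linear_combination (4 * y ^ 2) * ha2

lemma pos_of_quadratic_eq {a b c r s : ℝ} (ha : 0 < a) (hc : 0 < c) (hs : 0 < s)
    (hf : ∀ y : ℝ, a * y ^ 2 + b * y + c = a * (y - r) * (y - s)) : 0 < r := by
  have h0 : c = a * r * s := by simpa using hf 0
  exact pos_of_mul_pos_right (pos_of_mul_pos_left (h0 ▸ hc) hs.le) ha.le

theorem stmt10 (la1 la2 mu1 mu2 c1 c2 : ℝ)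
    (hla1 : 0 < la1) (hla2 : 0 < la2) (hmu1 : 0 < mu1) (hmu2 : 0 < mu2)
    (hc1 : 0 < c1) (hc2 : 0 < c2) (hne : la1 ≠ mu1 * c1) :
    ∃ y1 y2 y3 y4 : ℝ,
      0 < y1 ∧ y1 < y2 ∧ y2 < 1 ∧ 1 < y3 ∧ y3 < y4 ∧
      ∀ y : ℝ, Delta1 la1 la2 mu1 mu2 c1 c2 y = 0 ↔ (y = y1 ∨ y = y2 ∨ y = y3 ∨ y = y4) := by
  set a := √(mu1 * c1 * la1)
  have ha2 : a ^ 2 = mu1 * c1 * la1 := Real.sq_sqrt (by positivity)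
  have ha : 0 < a := Real.sqrt_pos.2 (by positivity)
  have hb : 0 < mu2 * c2 := by positivity
  have hAM : 2 * a < la1 + mu1 * c1 :=
    two_mul_lt_add_of_sq_eq_mul hla1 (by positivity) hne ha.le (by rw [ha2]; ring)
  set S := la1 + la2 + mu1 * c1 + mu2 * c2
  obtain ⟨r1, s1, hr1, hs1, hf1⟩ :=
    exists_roots_around_of_quadratic_neg (b := -(S + 2 * a)) (c := la2) (t := 1) hb (by linarith)
  obtain ⟨r2, s2, hr2, hs2, hf2⟩ :=
    exists_roots_around_of_quadratic_neg (b := -(S - 2 * a)) (c := la2) (t := 1) hb (by linarith)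
  have hr2pos : 0 < r2 := pos_of_quadratic_eq hb hla2 (by linarith) hf2
  have hs2pos : 0 < s2 := by linarith
  -- the `+` quadratic is the `−` one minus `4ay`, hence negative at `r2` and `s2`
  have hr12 : r1 < r2 :=
    (mem_Ioo_of_quadratic_neg hb (by linarith) hf1 (by nlinarith [hf2 r2, mul_pos ha hr2pos])).1
  have hs21 : s2 < s1 :=
    (mem_Ioo_of_quadratic_neg hb (by linarith) hf1 (by nlinarith [hf2 s2, mul_pos ha hs2pos])).2
  refine ⟨r1, r2, s2, s1, pos_of_quadratic_eq hb hla2 (by linarith) hf1, hr12, hr2, hs2, hs21,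
    fun y => ?_⟩
  rw [Delta1_eq_mul la1 la2 mu1 mu2 c1 c2 ha2, hf1, hf2]
  simp only [mul_eq_zero, sub_eq_zero, hb.ne', false_or]
  tauto
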